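/- Under the same hypotheses (r, g closed convex proper, f convex differentiable with L-Lipschitz gradient, 0 < α < 3/(2L)), the residual norms of the PPG iteration z^{k+1} = z^k − αp(z^k) are monotonically nonincreasing: ‖p(z^{k+1})‖² ≤ ‖p(z^k)‖² − (1 − 2αL/3)‖p(z^{k+1}) − p(z^k)‖². -/

import Mathlib

open Set Filter Topology
open scoped RealInnerProductSpace

noncomputable section

/-- `f` is closed (lower semicontinuous), convex, and proper
as an extended-real-valued function. -/
def ClosedConvexProper {E : Type*} [NormedAddCommGroup E] [NormedSpace ℝ E]
    (f : E → EReal) : Prop :=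
  LowerSemicontinuous f ∧
  (∀ (a b : ℝ) (x y : E), 0 ≤ a → 0 ≤ b → a + b = 1 →
    f (a • x + b • y) ≤ (a : EReal) * f x + (b : EReal) * f y) ∧
  (∀ x, f x ≠ ⊥) ∧ (∃ x, f x ≠ ⊤)

/-- `p` is a minimizer of the prox objective of the extended-real-valued `f` at `x₀`. -/
def IsProxPt {E : Type*} [NormedAddCommGroup E] [InnerProductSpace ℝ E]
    (f : E → EReal) (x₀ p : E) : Prop :=
  IsMinOn (fun x => f x + ((1 / 2 * ‖x - x₀‖ ^ 2 : ℝ) : EReal)) Set.univ p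

/-- `p` is a minimizer of the prox objective of the real-valued `f` at `x₀`. -/
def IsProxPtR {E : Type*} [NormedAddCommGroup E] [InnerProductSpace ℝ E]
    (f : E → ℝ) (x₀ p : E) : Prop :=
  IsMinOn (fun x => f x + 1 / 2 * ‖x - x₀‖ ^ 2) Set.univ p

/-!
Both proximal maps are firmly nonexpansive, and by the Baillon–Haddad argument (first-order
convexity plus the descent lemma) `∇f` is `1/L`-cocoercive. Feeding these three inequalities and
Young's inequality into the definition of `p` gives
`α (1 - αL/4) ‖p z₁ - p z₂‖² ≤ ⟪p z₁ - p z₂, z₁ - z₂⟫`.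
Along the iteration `z₁ - z₂ = α p z₁`, and expanding `‖p z₂‖² = ‖p z₁ - (p z₁ - p z₂)‖²` gives
the decrease with `1 - αL/2 ≥ 1 - 2αL/3` in place of the stated constant.
-/

section Gradient

variable {E : Type*} [NormedAddCommGroup E] [InnerProductSpace ℝ E] [CompleteSpace E]
  {f : E → ℝ} {f' : E → E}

lemma HasGradientAt.hasDerivAt_comp_add_smul {g x d : E} {t : ℝ}
    (hf : HasGradientAt f g (x + t • d)) :
    HasDerivAt (fun s : ℝ => f (x + s • d)) ⟪g, d⟫ t := by
  have hline : HasDerivAt (fun s : ℝ => x + s • d) d t := by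
    simpa using ((hasDerivAt_id t).smul_const d).const_add x
  have h := hf.hasFDerivAt.comp_hasDerivAt t hline
  simp only [InnerProductSpace.toDual_apply_apply] at h
  exact h

theorem ConvexOn.add_inner_gradient_le {s : Set E} {g x y : E} (hf : ConvexOn ℝ s f)
    (hx : x ∈ s) (hy : y ∈ s) (hg : HasGradientAt f g x) :
    f x + ⟪g, y - x⟫ ≤ f y := by
  have hline : ConvexOn ℝ (AffineMap.lineMap x y ⁻¹' s) (fun t : ℝ => f (x + t • (y - x))) := by
    have h := hf.comp_affineMap (AffineMap.lineMap x y)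
    rwa [show f ∘ AffineMap.lineMap x y = fun t : ℝ => f (x + t • (y - x)) from
      funext fun t => by simp [AffineMap.lineMap_apply_module', add_comm]] at h
  have hslope := hline.le_slope_of_hasDerivAt (x := 0) (y := 1) (by simpa using hx)
    (by simpa using hy) zero_lt_one (HasGradientAt.hasDerivAt_comp_add_smul (by simpa using hg))
  simp only [slope_def_field, zero_smul, add_zero, one_smul, add_sub_cancel, sub_zero,
    div_one] at hslope
  linarith

lemma image_one_le_of_deriv_sub_le_mul {φ φ' : ℝ → ℝ} {K : ℝ} (hφ : ∀ t, HasDerivAt φ (φ' t) t)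
    (hK : ∀ t ∈ Ico (0 : ℝ) 1, φ' t - φ' 0 ≤ K * t) :
    φ 1 ≤ φ 0 + φ' 0 + K / 2 := by
  have hB : ∀ t, HasDerivAt (fun s => φ 0 + s * φ' 0 + K / 2 * s ^ 2) (φ' 0 + K * t) t := by
    intro t
    refine ((((hasDerivAt_id t).mul_const (φ' 0)).const_add (φ 0)).add
      ((hasDerivAt_pow 2 t).const_mul (K / 2))).congr_deriv ?_
    simp only [one_mul, Nat.cast_ofNat]
    ring
  have := image_le_of_deriv_right_le_deriv_boundary (a := 0) (b := 1)
    (fun t _ => (hφ t).continuousAt.continuousWithinAt) (fun t _ => (hφ t).hasDerivWithinAt)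
    (by simp) (fun t _ => (hB t).continuousAt.continuousWithinAt)
    (fun t _ => (hB t).hasDerivWithinAt) (fun t ht => by linarith [hK t ht])
    (right_mem_Icc.2 zero_le_one)
  simpa using this

theorem le_add_inner_gradient_add_norm_sq {L : ℝ} (hf' : ∀ x, HasGradientAt f (f' x) x)
    (hLip : ∀ x y, ‖f' x - f' y‖ ≤ L * ‖x - y‖) (x y : E) :
    f y ≤ f x + ⟪f' x, y - x⟫ + L / 2 * ‖y - x‖ ^ 2 := by
  have h := image_one_le_of_deriv_sub_le_mul (K := L * ‖y - x‖ ^ 2)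
    (fun t => (hf' (x + t • (y - x))).hasDerivAt_comp_add_smul) fun t ht =>
      calc ⟪f' (x + t • (y - x)), y - x⟫ - ⟪f' (x + (0 : ℝ) • (y - x)), y - x⟫
          = ⟪f' (x + t • (y - x)) - f' x, y - x⟫ := by simp [inner_sub_left]
        _ ≤ ‖f' (x + t • (y - x)) - f' x‖ * ‖y - x‖ := real_inner_le_norm _ _
        _ ≤ L * ‖x + t • (y - x) - x‖ * ‖y - x‖ := by gcongr; exact hLip _ _
        _ = L * ‖y - x‖ ^ 2 * t := by
          rw [add_sub_cancel_left, norm_smul, Real.norm_of_nonneg ht.1]; ring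
  simp only [zero_smul, add_zero, one_smul, add_sub_cancel] at h
  linarith

theorem ConvexOn.add_inner_gradient_add_norm_sq_le {L : ℝ} (hf : ConvexOn ℝ univ f) (hL : 0 < L)
    (hf' : ∀ x, HasGradientAt f (f' x) x) (hLip : ∀ x y, ‖f' x - f' y‖ ≤ L * ‖x - y‖) (x y : E) :
    f x + ⟪f' x, y - x⟫ + 1 / (2 * L) * ‖f' y - f' x‖ ^ 2 ≤ f y := by
  set G := f' y - f' x
  -- `z` minimises the descent-lemma upper bound of `f - ⟪f' x, ·⟫` around `y`
  set z := y - L⁻¹ • G with hz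
  have hlower := hf.add_inner_gradient_le (mem_univ x) (mem_univ z) (hf' x)
  have hupper := le_add_inner_gradient_add_norm_sq hf' hLip y z
  have hzx : z - x = (y - x) - L⁻¹ • G := by rw [hz]; abel
  have hzy : z - y = -(L⁻¹ • G) := by rw [hz]; abel
  rw [hzx, inner_sub_right, inner_smul_right] at hlower
  rw [hzy, inner_neg_right, inner_smul_right, norm_neg, norm_smul, Real.norm_of_nonneg
    (inv_nonneg.2 hL.le)] at hupper
  have hG : ⟪f' y, G⟫ - ⟪f' x, G⟫ = ‖G‖ ^ 2 := by
    rw [← inner_sub_left, real_inner_self_eq_norm_sq]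
  have hcoef : L / 2 * (L⁻¹ * ‖G‖) ^ 2 = L⁻¹ * ‖G‖ ^ 2 - 1 / (2 * L) * ‖G‖ ^ 2 := by
    field_simp; ring
  linear_combination hlower + hupper + hcoef - L⁻¹ * hG

theorem ConvexOn.norm_sq_gradient_sub_le {L : ℝ} (hf : ConvexOn ℝ univ f) (hL : 0 < L)
    (hf' : ∀ x, HasGradientAt f (f' x) x) (hLip : ∀ x y, ‖f' x - f' y‖ ≤ L * ‖x - y‖) (x y : E) :
    ‖f' x - f' y‖ ^ 2 ≤ L * ⟪f' x - f' y, x - y⟫ := by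
  have hxy := hf.add_inner_gradient_add_norm_sq_le hL hf' hLip x y
  have hyx := hf.add_inner_gradient_add_norm_sq_le hL hf' hLip y x
  rw [norm_sub_rev] at hxy
  have hinner : ⟪f' x - f' y, x - y⟫ = -⟪f' x, y - x⟫ - ⟪f' y, x - y⟫ := by
    rw [inner_sub_left, ← neg_sub x y, inner_neg_right]; ring
  have hcoef : L * (1 / (2 * L)) = 1 / 2 := by field_simp
  linear_combination L * (hxy + hyx) - L * hinner - 2 * ‖f' x - f' y‖ ^ 2 * hcoef

end Gradient

section Prox

variable {E : Type*} [NormedAddCommGroup E] [InnerProductSpace ℝ E]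

def ConvexProper (φ : E → EReal) : Prop :=
  (∀ (a b : ℝ) (x y : E), 0 ≤ a → 0 ≤ b → a + b = 1 →
    φ (a • x + b • y) ≤ (a : EReal) * φ x + (b : EReal) * φ y) ∧
  (∀ x, φ x ≠ ⊥) ∧ (∃ x, φ x ≠ ⊤)

theorem ConvexProper.const_mul {r : E → EReal} (hr : ConvexProper r) {α : ℝ} (hα : 0 < α) :
    ConvexProper fun x => (α : EReal) * r x := by
  obtain ⟨hconv, hbot, x₀, hx₀⟩ := hr
  refine ⟨fun a b x y ha hb hab => ?_, fun x => ?_, x₀, ?_⟩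
  · calc (α : EReal) * r (a • x + b • y) ≤ α * (a * r x + b * r y) :=
          mul_le_mul_of_nonneg_left (hconv a b x y ha hb hab) (EReal.coe_nonneg.2 hα.le)
      _ = a * (α * r x) + b * (α * r y) := by
          rw [EReal.left_distrib_of_nonneg_of_ne_top (EReal.coe_nonneg.2 hα.le)
            (EReal.coe_ne_top α), mul_left_comm, mul_left_comm (α : EReal)]
  · exact (EReal.mul_ne_bot _ _).2 ⟨.inl (EReal.coe_ne_bot α), .inr (hbot x),
      .inl (EReal.coe_ne_top α), .inl (EReal.coe_nonneg.2 hα.le)⟩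
  · exact (EReal.mul_ne_top _ _).2 ⟨.inl (EReal.coe_ne_bot α), .inl (EReal.coe_nonneg.2 hα.le),
      .inl (EReal.coe_ne_top α), .inr hx₀⟩

def FirmlyNonexpansive (T : E → E) : Prop :=
  ∀ x y, ‖T x - T y‖ ^ 2 ≤ ⟪T x - T y, x - y⟫

theorem IsProxPt.ne_top {φ : E → EReal} (hφ : ∃ x, φ x ≠ ⊤) {w p : E} (hp : IsProxPt φ w p) :
    φ p ≠ ⊤ := by
  obtain ⟨x, hx⟩ := hφ
  intro htop
  have hmin := isMinOn_iff.mp hp x (mem_univ x)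
  rw [htop, EReal.top_add_coe, top_le_iff] at hmin
  exact EReal.add_ne_top hx (EReal.coe_ne_top _) hmin

theorem IsProxPt.inner_sub_le_of_segment {φ : E → EReal} (hφ : ConvexProper φ) {w p x : E}
    (hp : IsProxPt φ w p) {a b : ℝ} (ha : φ p = a) (hb : φ x = b) {t : ℝ} (ht₀ : 0 < t)
    (ht₁ : t ≤ 1) :
    ⟪w - p, x - p⟫ ≤ b - a + t / 2 * ‖x - p‖ ^ 2 := by
  have hconv : φ ((1 - t) • p + t • x) ≤ ((1 - t) * a + t * b : ℝ) := by
    simpa [ha, hb] using hφ.1 (1 - t) t p x (by linarith) ht₀.le (by ring)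
  have hmin : a + 1 / 2 * ‖p - w‖ ^ 2 ≤
      (1 - t) * a + t * b + 1 / 2 * ‖(1 - t) • p + t • x - w‖ ^ 2 := by
    have h := isMinOn_iff.mp hp ((1 - t) • p + t • x) (mem_univ _)
    rw [ha, ← EReal.coe_add] at h
    refine EReal.coe_le_coe_iff.mp (h.trans ?_)
    rw [EReal.coe_add]
    gcongr
  have hseg : (1 - t) • p + t • x - w = (p - w) + t • (x - p) := by module
  rw [hseg, norm_add_sq_real, real_inner_smul_right, norm_smul, Real.norm_of_nonneg ht₀.le]
    at hmin
  have hwp : ⟪w - p, x - p⟫ = -⟪p - w, x - p⟫ := by rw [← inner_neg_left, neg_sub]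
  rw [hwp]
  nlinarith

theorem IsProxPt.inner_sub_le {φ : E → EReal} (hφ : ConvexProper φ) {w p x : E}
    (hp : IsProxPt φ w p) (hx : φ x ≠ ⊤) :
    ⟪w - p, x - p⟫ ≤ (φ x).toReal - (φ p).toReal := by
  have ha := (EReal.coe_toReal (hp.ne_top hφ.2.2) (hφ.2.1 p)).symm
  have hb := (EReal.coe_toReal hx (hφ.2.1 x)).symm
  have hlim : Tendsto (fun t : ℝ => (φ x).toReal - (φ p).toReal + t / 2 * ‖x - p‖ ^ 2)
      (𝓝[>] 0) (𝓝 ((φ x).toReal - (φ p).toReal)) := by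
    refine tendsto_nhdsWithin_of_tendsto_nhds ?_
    simpa using (Continuous.tendsto (by fun_prop) 0 :
      Tendsto (fun t : ℝ => (φ x).toReal - (φ p).toReal + t / 2 * ‖x - p‖ ^ 2) _ _)
  refine ge_of_tendsto hlim ?_
  filter_upwards [Ioc_mem_nhdsGT zero_lt_one] with t ht
  exact hp.inner_sub_le_of_segment hφ ha hb ht.1 ht.2

theorem ConvexProper.firmlyNonexpansive {φ : E → EReal} (hφ : ConvexProper φ) {T : E → E}
    (hT : ∀ w, IsProxPt φ w (T w)) : FirmlyNonexpansive T := by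
  intro x y
  have hx := (hT x).inner_sub_le hφ ((hT y).ne_top hφ.2.2)
  have hy := (hT y).inner_sub_le hφ ((hT x).ne_top hφ.2.2)
  have hsum : ⟪T x - T y, x - y⟫ - ‖T x - T y‖ ^ 2
      = -⟪x - T x, T y - T x⟫ - ⟪y - T y, T x - T y⟫ := by
    rw [← real_inner_self_eq_norm_sq]
    simp only [inner_sub_left, inner_sub_right, real_inner_comm]
    ring
  linarith

end Prox

section PPG

variable {E : Type*} [NormedAddCommGroup E] [InnerProductSpace ℝ E]

/- `a`, `b`, `u`, `G` are the differences of the two proximal outputs, of the inputs and of the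
gradients; `hA`, `hB`, `hC` are firm nonexpansiveness of both proximal maps and cocoercivity. -/
lemma one_sub_mul_norm_sq_sub_le_inner_of_splitting {a b u G : E} {α L : ℝ} (hα : 0 ≤ α)
    (hL : 0 < L) (hA : ‖a‖ ^ 2 ≤ ⟪a, u⟫) (hB : ‖b‖ ^ 2 ≤ ⟪b, (2 : ℝ) • a - u - α • G⟫)
    (hC : ‖G‖ ^ 2 ≤ L * ⟪G, a⟫) :
    (1 - α * L / 4) * ‖a - b‖ ^ 2 ≤ ⟪a - b, u⟫ := by
  have hYoung : ‖G‖ * ‖a - b‖ ≤ ‖G‖ ^ 2 / L + L / 4 * ‖a - b‖ ^ 2 := by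
    have hsq : 0 ≤ (‖G‖ / L - ‖a - b‖ / 2) ^ 2 * L := by positivity
    have hL' : L ≠ 0 := hL.ne'
    field_simp at hsq ⊢
    nlinarith
  have hGb : -(L / 4 * ‖a - b‖ ^ 2) ≤ ⟪G, b⟫ := by
    have hCS := real_inner_le_norm G (a - b)
    have hC' : ‖G‖ ^ 2 / L ≤ ⟪G, a⟫ := by rwa [div_le_iff₀ hL, mul_comm]
    rw [inner_sub_right] at hCS
    linarith
  rw [inner_sub_right, inner_sub_right, inner_smul_right, inner_smul_right,
    real_inner_comm G b, real_inner_comm a b] at hB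
  have hexp := norm_sub_sq_real a b
  rw [inner_sub_left]
  linarith [mul_le_mul_of_nonneg_left hGb hα]

theorem ppgResidual_cocoercive {α L : ℝ} (hα : 0 < α) (hL : 0 < L) {Pr Pg F P : E → E}
    (hPr : FirmlyNonexpansive Pr) (hPg : FirmlyNonexpansive Pg)
    (hF : ∀ x y, ‖F x - F y‖ ^ 2 ≤ L * ⟪F x - F y, x - y⟫)
    (hP : ∀ z, P z = α⁻¹ • (Pr z - Pg ((2 : ℝ) • Pr z - z - α • F (Pr z)))) (z₁ z₂ : E) :
    α * (1 - α * L / 4) * ‖P z₁ - P z₂‖ ^ 2 ≤ ⟪P z₁ - P z₂, z₁ - z₂⟫ := by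
  set w : E → E := fun z => (2 : ℝ) • Pr z - z - α • F (Pr z)
  have hres : ∀ z, Pr z - Pg (w z) = α • P z := fun z => by
    rw [hP, smul_inv_smul₀ hα.ne']
  have hw : w z₁ - w z₂ =
      (2 : ℝ) • (Pr z₁ - Pr z₂) - (z₁ - z₂) - α • (F (Pr z₁) - F (Pr z₂)) := by
    simp only [w]; module
  have hbound := one_sub_mul_norm_sq_sub_le_inner_of_splitting hα.le hL (hPr z₁ z₂)
    (hw ▸ hPg (w z₁) (w z₂)) (hF _ _)
  rw [sub_sub_sub_comm, hres, hres, ← smul_sub, inner_smul_left, norm_smul,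
    Real.norm_of_nonneg hα.le, conj_trivial, mul_pow] at hbound
  refine le_of_mul_le_mul_left ?_ hα
  linarith

lemma norm_sq_le_of_mul_norm_sq_le_inner {u v : E} {c : ℝ} (h : c * ‖u - v‖ ^ 2 ≤ ⟪u - v, u⟫) :
    ‖v‖ ^ 2 ≤ ‖u‖ ^ 2 - (2 * c - 1) * ‖v - u‖ ^ 2 := by
  have hv := norm_sub_sq_real u (u - v)
  rw [sub_sub_cancel, real_inner_comm] at hv
  rw [hv, norm_sub_rev v u]
  linarith

end PPG

theorem stmt13_general
    {d : ℕ} (α : ℝ) (hα : 0 < α)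
    (r g : EuclideanSpace ℝ (Fin d) → EReal)
    (hr : ClosedConvexProper r) (hg : ClosedConvexProper g)
    (f : EuclideanSpace ℝ (Fin d) → ℝ) (hfconv : ConvexOn ℝ Set.univ f)
    (f' : EuclideanSpace ℝ (Fin d) → EuclideanSpace ℝ (Fin d))
    (hf' : ∀ x, HasGradientAt f (f' x) x)
    (Pr Pg : EuclideanSpace ℝ (Fin d) → EuclideanSpace ℝ (Fin d))
    (hPr : ∀ w, IsProxPt (fun x => (α : EReal) * r x) w (Pr w))
    (hPg : ∀ w, IsProxPt (fun x => (α : EReal) * g x) w (Pg w))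
    (P : EuclideanSpace ℝ (Fin d) → EuclideanSpace ℝ (Fin d))
    (hP : ∀ z, P z = α⁻¹ • (Pr z - Pg ((2 : ℝ) • Pr z - z - α • f' (Pr z))))
    (L : ℝ) (hL : 0 < L)
    (hLip : ∀ x y, ‖f' x - f' y‖ ≤ L * ‖x - y‖)
    (z : ℕ → EuclideanSpace ℝ (Fin d))
    (hiter : ∀ k, z (k + 1) = z k - α • P (z k)) :
    ∀ k, ‖P (z (k + 1))‖ ^ 2 ≤
      ‖P (z k)‖ ^ 2 - (1 - 2 * α * L / 3) * ‖P (z (k + 1)) - P (z k)‖ ^ 2 := by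
  intro k
  have hcoco := ppgResidual_cocoercive hα hL
    ((ConvexProper.const_mul hr.2 hα).firmlyNonexpansive hPr)
    ((ConvexProper.const_mul hg.2 hα).firmlyNonexpansive hPg)
    (hfconv.norm_sq_gradient_sub_le hL hf' hLip) hP (z k) (z (k + 1))
  have hstep : z k - z (k + 1) = α • P (z k) := by rw [hiter k, sub_sub_cancel]
  rw [hstep, inner_smul_right, mul_assoc] at hcoco
  have hdecrease := norm_sq_le_of_mul_norm_sq_le_inner (le_of_mul_le_mul_left hcoco hα)
  have hslack : 0 ≤ α * L * ‖P (z (k + 1)) - P (z k)‖ ^ 2 := by positivity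
  linarith

/-- The PPG residual norms are monotonically nonincreasing. -/
theorem stmt13
    {d : ℕ} (α : ℝ) (hα : 0 < α)
    (r g : EuclideanSpace ℝ (Fin d) → EReal)
    (hr : ClosedConvexProper r) (hg : ClosedConvexProper g)
    (f : EuclideanSpace ℝ (Fin d) → ℝ) (hfconv : ConvexOn ℝ Set.univ f)
    (f' : EuclideanSpace ℝ (Fin d) → EuclideanSpace ℝ (Fin d))
    (hf' : ∀ x, HasGradientAt f (f' x) x)
    (Pr Pg : EuclideanSpace ℝ (Fin d) → EuclideanSpace ℝ (Fin d))
    (hPr : ∀ w, IsProxPt (fun x => (α : EReal) * r x) w (Pr w))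
    (hPg : ∀ w, IsProxPt (fun x => (α : EReal) * g x) w (Pg w))
    (P : EuclideanSpace ℝ (Fin d) → EuclideanSpace ℝ (Fin d))
    (hP : ∀ z, P z = α⁻¹ • (Pr z - Pg ((2 : ℝ) • Pr z - z - α • f' (Pr z))))
    (L : ℝ) (hL : 0 < L)
    (hLip : ∀ x y, ‖f' x - f' y‖ ≤ L * ‖x - y‖)
    (hαL : α < 3 / (2 * L))
    (z : ℕ → EuclideanSpace ℝ (Fin d))
    (hiter : ∀ k, z (k + 1) = z k - α • P (z k)) :
    ∀ k, ‖P (z (k + 1))‖ ^ 2 ≤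
      ‖P (z k)‖ ^ 2 - (1 - 2 * α * L / 3) * ‖P (z (k + 1)) - P (z k)‖ ^ 2 :=
  stmt13_general α hα r g hr hg f hfconv f' hf' Pr Pg hPr hPg P hP L hL hLip z hiter
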